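/- arXiv:2303.04383 — 4 statements merged into one kernel-verified Lean document; each statement's English description precedes it below -/
import Mathlib

section
/- The map ψ sending a matrix A = [[a,b],[c,d]] in Γ₀(n)₊ (a subgroup of SL(2,ℝ) normalizing Γ₀(n)) to the 3×3 matrix [[d², -c²/n, 2cd],[-nb², a², -2nab],[bd, -ac/n, ad+bc]] satisfies ᵗψ(A)·Σ·ψ(A) = Σ, where Σ = [[0,1,0],[1,0,0],[0,0,2n]]. That is, ψ(A) preserves the bilinear form of the lattice U ⊕ ⟨2n⟩. -/
/-!
`ψ(A)` is the conjugation action `X ↦ A X A⁻¹` on traceless 2×2 matrices, written in the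
coordinates `v ↦ !![v₂, v₁ / n; v₀, -v₂]`, and in these coordinates the form `Σ` becomes
`n · tr (X Y)`. Conjugation preserves the trace form; with the adjugate in place of `A⁻¹` it
scales it by `(det A)²`, so `ᵗψ(A) Σ ψ(A) = (det A)² Σ` for every `A`.
-/

open Matrix

/-- The map `ψ` from 2×2 real matrices of determinant one to 3×3 real matrices. -/
noncomputable def psiMap (n : ℝ) (A : Matrix (Fin 2) (Fin 2) ℝ) : Matrix (Fin 3) (Fin 3) ℝ :=
  let a := A 0 0; let b := A 0 1; let c := A 1 0; let d := A 1 1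
  !![d ^ 2, -c ^ 2 / n, 2 * c * d;
     -n * b ^ 2, a ^ 2, -2 * n * a * b;
     b * d, -a * c / n, a * d + b * c]

/-- The Gram matrix of the lattice `U ⊕ ⟨2n⟩`. -/
def SigmaMat (n : ℝ) : Matrix (Fin 3) (Fin 3) ℝ :=
  !![0, 1, 0; 1, 0, 0; 0, 0, 2 * n]

theorem Matrix.ext_of_dotProduct_mulVec {m n R : Type*} [Fintype m] [Fintype n] [DecidableEq m]
    [DecidableEq n] [NonAssocSemiring R] {M N : Matrix m n R}
    (h : ∀ v w, v ⬝ᵥ (M *ᵥ w) = v ⬝ᵥ (N *ᵥ w)) : M = N := by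
  ext i j
  simpa [mulVec_single_one, single_dotProduct] using h (Pi.single i 1) (Pi.single j 1)

theorem Matrix.trace_conj_adjugate_mul {n R : Type*} [Fintype n] [DecidableEq n] [CommRing R]
    (A X Y : Matrix n n R) :
    trace (A * X * adjugate A * (A * Y * adjugate A)) = A.det ^ 2 * trace (X * Y) := by
  have hconj : A * X * adjugate A * (A * Y * adjugate A) = A.det • (A * (X * Y * adjugate A)) := by
    simp only [Matrix.mul_assoc, ← Matrix.mul_assoc (adjugate A) A, adjugate_mul, smul_mul,
      Matrix.one_mul, Matrix.mul_smul]
  rw [hconj, trace_smul, trace_mul_comm, Matrix.mul_assoc, adjugate_mul, Matrix.mul_smul,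
    Matrix.mul_one, trace_smul, smul_eq_mul, smul_eq_mul, ← mul_assoc, sq]

noncomputable def tracelessMatrix (n : ℝ) (v : Fin 3 → ℝ) : Matrix (Fin 2) (Fin 2) ℝ :=
  !![v 2, v 1 / n; v 0, -v 2]

theorem dotProduct_sigmaMat_mulVec {n : ℝ} (hn : n ≠ 0) (v w : Fin 3 → ℝ) :
    v ⬝ᵥ (SigmaMat n *ᵥ w) = n * trace (tracelessMatrix n v * tracelessMatrix n w) := by
  rw [tracelessMatrix, tracelessMatrix, mul_fin_two, trace_fin_two_of, SigmaMat, vec3_dotProduct]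
  simp only [mulVec, of_apply, vec3_dotProduct, cons_val_zero, cons_val_one, cons_val_two,
    head_cons, tail_cons]
  field_simp
  ring

theorem tracelessMatrix_psiMap_mulVec {n : ℝ} (hn : n ≠ 0) (A : Matrix (Fin 2) (Fin 2) ℝ)
    (v : Fin 3 → ℝ) :
    tracelessMatrix n (psiMap n A *ᵥ v) = A * tracelessMatrix n v * adjugate A := by
  rw [eta_fin_two A, adjugate_fin_two_of, tracelessMatrix, tracelessMatrix, mul_fin_two,
    mul_fin_two, psiMap]
  simp only [mulVec, of_apply, vec3_dotProduct, cons_val_zero, cons_val_one, cons_val_two,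
    head_cons, tail_cons, EmbeddingLike.apply_eq_iff_eq, vecCons_inj, and_true]
  refine ⟨⟨?_, ?_⟩, ?_, ?_⟩ <;> field_simp <;> ring

theorem transpose_psiMap_mul_sigmaMat_mul_psiMap {n : ℝ} (hn : n ≠ 0)
    (A : Matrix (Fin 2) (Fin 2) ℝ) :
    (psiMap n A)ᵀ * SigmaMat n * psiMap n A = A.det ^ 2 • SigmaMat n := by
  refine ext_of_dotProduct_mulVec fun v w => ?_
  calc v ⬝ᵥ (((psiMap n A)ᵀ * SigmaMat n * psiMap n A) *ᵥ w)
      = (psiMap n A *ᵥ v) ⬝ᵥ (SigmaMat n *ᵥ (psiMap n A *ᵥ w)) := by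
        rw [← mulVec_mulVec, ← mulVec_mulVec, dotProduct_mulVec, vecMul_transpose]
    _ = A.det ^ 2 * (v ⬝ᵥ (SigmaMat n *ᵥ w)) := by
        rw [dotProduct_sigmaMat_mulVec hn, dotProduct_sigmaMat_mulVec hn,
          tracelessMatrix_psiMap_mulVec hn, tracelessMatrix_psiMap_mulVec hn,
          trace_conj_adjugate_mul, mul_left_comm]
    _ = v ⬝ᵥ ((A.det ^ 2 • SigmaMat n) *ᵥ w) := by
        rw [smul_mulVec, dotProduct_smul, smul_eq_mul]

/-- `ψ(A)` preserves the bilinear form of `U ⊕ ⟨2n⟩`: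
`ᵗψ(A) · Σ · ψ(A) = Σ` for every `A ∈ SL(2,ℝ)`. -/
theorem psi_preserves_form (n : ℕ) (hn : 1 ≤ n) (A : Matrix (Fin 2) (Fin 2) ℝ)
    (hA : A.det = 1) :
    (psiMap (n : ℝ) A)ᵀ * SigmaMat (n : ℝ) * psiMap (n : ℝ) A = SigmaMat (n : ℝ) := by
  have hn0 : (n : ℝ) ≠ 0 := Nat.cast_ne_zero.mpr (by omega)
  rw [transpose_psiMap_mul_sigmaMat_mul_psiMap hn0, hA, one_pow, one_smul]
end

section
/- The map ψ defined by ψ([[a,b],[c,d]]) = [[d², -c²/n, 2cd],[-nb², a², -2nab],[bd, -ac/n, ad+bc]] is a group homomorphism: ψ(AB) = ψ(A)ψ(B) for all 2×2 real matrices A, B of determinant 1. -/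
open Matrix

/-!
`ψ(A)` is the symmetric square of `adj(A)ᵀ = [[d, -c], [-b, a]]`, conjugated by the diagonal
matrix `diag(-2, 2n, 1)`. Both `A ↦ adj(A)ᵀ` and the symmetric square are multiplicative on all
2×2 matrices, hence so is `ψ`.
-/

section Sym2

variable {R : Type*} [CommRing R]

/-- The matrix of `Sym² M` in the basis `e₀², e₁², e₀e₁`. -/
def sym2Matrix (M : Matrix (Fin 2) (Fin 2) R) : Matrix (Fin 3) (Fin 3) R :=
  !![M 0 0 ^ 2, M 0 1 ^ 2, M 0 0 * M 0 1;
     M 1 0 ^ 2, M 1 1 ^ 2, M 1 0 * M 1 1;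
     2 * M 0 0 * M 1 0, 2 * M 0 1 * M 1 1, M 0 0 * M 1 1 + M 0 1 * M 1 0]

theorem sym2Matrix_mul (M N : Matrix (Fin 2) (Fin 2) R) :
    sym2Matrix (M * N) = sym2Matrix M * sym2Matrix N := by
  ext i j
  fin_cases i <;> fin_cases j <;>
    simp [sym2Matrix, mul_apply, Fin.sum_univ_succ] <;> ring

end Sym2

theorem adjugate_transpose_mul {ι R : Type*} [Fintype ι] [DecidableEq ι] [CommRing R]
    (A B : Matrix ι ι R) : (A * B).adjugateᵀ = A.adjugateᵀ * B.adjugateᵀ := by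
  rw [adjugate_mul_distrib, transpose_mul]

theorem psiMap_eq_diagonal_mul_sym2Matrix {n : ℝ} (hn : n ≠ 0) (A : Matrix (Fin 2) (Fin 2) ℝ) :
    psiMap n A =
      diagonal ![-2, 2 * n, 1] * sym2Matrix A.adjugateᵀ * diagonal ![-1 / 2, 1 / (2 * n), 1] := by
  ext i j
  fin_cases i <;> fin_cases j <;>
    simp [psiMap, sym2Matrix, adjugate_fin_two, diagonal_mul, mul_diagonal] <;> field_simp

theorem psiMap_mul {n : ℝ} (hn : n ≠ 0) (A B : Matrix (Fin 2) (Fin 2) ℝ) :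
    psiMap n (A * B) = psiMap n A * psiMap n B := by
  have diagonal_inv_mul : diagonal ![-1 / 2, 1 / (2 * n), 1] * diagonal ![-2, 2 * n, 1] = 1 := by
    rw [diagonal_mul_diagonal, ← diagonal_one]
    congr 1
    ext i
    fin_cases i <;> simp [field]
  simp only [psiMap_eq_diagonal_mul_sym2Matrix hn, adjugate_transpose_mul, sym2Matrix_mul,
    Matrix.mul_assoc]
  rw [← Matrix.mul_assoc (diagonal ![-1 / 2, 1 / (2 * n), 1]), diagonal_inv_mul, Matrix.one_mul]

theorem psi_mul_general (n : ℕ) (hn : 1 ≤ n) (A B : Matrix (Fin 2) (Fin 2) ℝ) :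
    psiMap (n : ℝ) (A * B) = psiMap (n : ℝ) A * psiMap (n : ℝ) B :=
  psiMap_mul (by positivity) A B

/-- `ψ` is multiplicative: `ψ(AB) = ψ(A)ψ(B)` for 2×2 real matrices of determinant one. -/
theorem psi_mul (n : ℕ) (hn : 1 ≤ n) (A B : Matrix (Fin 2) (Fin 2) ℝ)
    (hA : A.det = 1) (hB : B.det = 1) :
    psiMap (n : ℝ) (A * B) = psiMap (n : ℝ) A * psiMap (n : ℝ) B :=
  psi_mul_general n hn A B
end

section
/- The power series w₀(x) = Σ_{n,m ≥ 0} ((n+m)!)⁴/((n!)⁴(m!)⁴) x^{n+m} = Σ_{k≥0} (Σ_{n+m=k} ((k)!)⁴/((n!)⁴(m!)⁴)) x^k is annihilated by the differential operator θ³ − 2x(2θ+1)(3θ²+3θ+1) − x²(4θ+3)(4θ+4)(4θ+5), where θ = x d/dx. Equivalently, its coefficients aₖ = Σ_{n=0}^{k} (k!)⁴/((n!)⁴((k−n)!)⁴) satisfy the recursion (k+1)³ a_{k+1} = 2(2k+1)(3k²+3k+1) aₖ + 4(k)(4k−1)(4k+1) a_{k−1} (with the convention a_{−1}=0), arising from the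 Picard–Fuchs equation of the mirror family of degree-20 K3 surfaces. -/
open Finset

/-- Coefficients `aₖ = Σ_{n=0}^{k} (k!)⁴/((n!)⁴((k−n)!)⁴)` of the regular period
`w₀(x)` of the mirror family of degree-20 K3 surfaces. -/
noncomputable def degTwentyCoeff (k : ℕ) : ℚ :=
  ∑ n ∈ Finset.range (k + 1),
    ((Nat.factorial k : ℚ)) ^ 4 /
      (((Nat.factorial n : ℚ)) ^ 4 * ((Nat.factorial (k - n) : ℚ)) ^ 4)

/-- WZ certificate polynomial for the degree-20 Picard–Fuchs recursion. -/
def degTwentyCert (K N : ℚ) : ℚ :=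
  4*N - 16*N^2 + 24*N^3 - 16*N^4 + 4*N^5
    + K * (-10 + 72*N - 172*N^2 + 184*N^3 - 90*N^4 + 16*N^5)
    + K^2 * (-80 + 368*N - 600*N^2 + 416*N^3 - 104*N^4)
    + K^3 * (-255 + 796*N - 818*N^2 + 276*N^3)
    + K^4 * (-385 + 756*N - 374*N^2)
    + K^5 * (-275 + 260*N)
    - 75*K^6

/-- The telescoping certificate function `G(k,n)`. -/
noncomputable def degTwentyG (k n : ℕ) : ℚ :=
  degTwentyCert (k : ℚ) (n : ℚ) * (n : ℚ)^4 * (((k+1).choose n : ℚ))^4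
    / (((k : ℚ)+1)^4 * (k : ℚ)^3)

lemma degTwentyCert_key (K N : ℚ) :
    degTwentyCert K (N+1) * (K+1-N)^4 - degTwentyCert K N * N^4
      = K^3*(K+1)^7 - 2*(2*K+1)*(3*K^2+3*K+1)*K^3*(K+1-N)^4
        - 4*(4*K-1)*(4*K+1)*(K-N)^4*(K+1-N)^4 := by
  unfold degTwentyCert; ring

lemma degTwentyCert_top (K : ℚ) :
    degTwentyCert K (K+1) = -K^3*(K+1)^3 := by
  unfold degTwentyCert; ring

/-- The pointwise (certificate) identity, in abstract form. -/
lemma degTwenty_pointwise (K N c c1 c2 c3 : ℚ)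
    (hK : K ≠ 0) (hK1 : K + 1 ≠ 0) (hKN : K + 1 - N ≠ 0) (hN : N + 1 ≠ 0)
    (e1 : c1 * (K + 1 - N) = (K + 1) * c)
    (e2 : c * (K - N) = K * c2)
    (e3 : c3 * (N + 1) = c1 * (K + 1 - N)) :
    (K+1)^3 * c1^4
      = 2*(2*K+1)*(3*K^2+3*K+1) * c^4 + 4*K*(4*K-1)*(4*K+1) * c2^4
        + (degTwentyCert K (N+1) * (N+1)^4 * c3^4 / ((K+1)^4 * K^3)
            - degTwentyCert K N * N^4 * c1^4 / ((K+1)^4 * K^3)) := by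
  have key := degTwentyCert_key K N
  have f1 : c1^4 * (K+1-N)^4 = (K+1)^4 * c^4 := by rw [← mul_pow, e1, mul_pow]
  have f2 : c^4 * (K-N)^4 = K^4 * c2^4 := by rw [← mul_pow, e2, mul_pow]
  have f3 : c3^4 * (N+1)^4 = c1^4 * (K+1-N)^4 := by rw [← mul_pow, e3, mul_pow]
  have hu : (K+1-N)^4 ≠ 0 := pow_ne_zero _ hKN
  have hD : (K+1)^4 * K^3 ≠ 0 := mul_ne_zero (pow_ne_zero _ hK1) (pow_ne_zero _ hK)
  have main' : (degTwentyCert K (N+1) * (N+1)^4 * c3^4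
        - degTwentyCert K N * N^4 * c1^4) * (K+1-N)^4
      = (((K+1)^3*c1^4 - 2*(2*K+1)*(3*K^2+3*K+1)*c^4
          - 4*K*(4*K-1)*(4*K+1)*c2^4) * ((K+1)^4*K^3)) * (K+1-N)^4 := by
    linear_combination (degTwentyCert K (N+1)*(K+1-N)^4) * f3
      + (degTwentyCert K (N+1)*(K+1-N)^4 - degTwentyCert K N*N^4 - (K+1)^7*K^3) * f1
      - (4*(4*K-1)*(4*K+1)*(K+1)^4*(K+1-N)^4) * f2
      + ((K+1)^4*c^4) * key
  have main := mul_right_cancel₀ hu main'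
  have hTQ : degTwentyCert K (N+1) * (N+1)^4 * c3^4 / ((K+1)^4*K^3)
      - degTwentyCert K N * N^4 * c1^4 / ((K+1)^4*K^3)
      = (K+1)^3*c1^4 - 2*(2*K+1)*(3*K^2+3*K+1)*c^4 - 4*K*(4*K-1)*(4*K+1)*c2^4 := by
    rw [div_sub_div_same, main, mul_div_assoc, div_self hD, mul_one]
  rw [hTQ]; ring

lemma degTwentyCoeff_eq_sum_choose (k : ℕ) :
    degTwentyCoeff k = ∑ n ∈ Finset.range (k + 1), ((k.choose n : ℚ))^4 := by
  unfold degTwentyCoeff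
  refine Finset.sum_congr rfl fun n hn => ?_
  rw [Finset.mem_range, Nat.lt_succ_iff] at hn
  rw [Nat.cast_choose ℚ hn, div_pow, mul_pow]

/-- The Picard–Fuchs recursion
`(k+1)³ a_{k+1} = 2(2k+1)(3k²+3k+1) aₖ + 4k(4k−1)(4k+1) a_{k−1}`
(with `a₋₁ = 0`), equivalent to annihilation of `w₀` by
`θ³ − 2x(2θ+1)(3θ²+3θ+1) − x²(4θ+3)(4θ+4)(4θ+5)`. -/
theorem degTwenty_picard_fuchs_recursion (k : ℕ) :
    ((k : ℚ) + 1) ^ 3 * degTwentyCoeff (k + 1)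
      = 2 * (2 * (k : ℚ) + 1) * (3 * (k : ℚ) ^ 2 + 3 * k + 1) * degTwentyCoeff k
        + 4 * (k : ℚ) * (4 * (k : ℚ) - 1) * (4 * (k : ℚ) + 1) *
            (if k = 0 then 0 else degTwentyCoeff (k - 1)) := by
  rcases Nat.eq_zero_or_pos k with hk0 | hk
  · subst hk0
    simp only [if_pos rfl]
    norm_num [degTwentyCoeff, Finset.sum_range_succ, Nat.factorial]
  · rw [if_neg (Nat.pos_iff_ne_zero.mp hk)]
    have hK : (k : ℚ) ≠ 0 := Nat.cast_ne_zero.mpr (Nat.pos_iff_ne_zero.mp hk)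
    have hK1 : (k : ℚ) + 1 ≠ 0 := by positivity
    have H : ∀ n ∈ Finset.range (k + 2),
        ((k:ℚ)+1)^3 * (((k+1).choose n : ℚ))^4
          = 2*(2*(k:ℚ)+1)*(3*(k:ℚ)^2+3*(k:ℚ)+1) * ((k.choose n : ℚ))^4
            + 4*(k:ℚ)*(4*(k:ℚ)-1)*(4*(k:ℚ)+1) * (((k-1).choose n : ℚ))^4
            + (degTwentyG k (n+1) - degTwentyG k n) := by
      intro n hn
      rw [Finset.mem_range] at hn
      have hn1 : n ≤ k + 1 := by omega
      rcases Nat.lt_or_ge n (k+1) with h | h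
      · -- the case n ≤ k
        have hnk : n ≤ k := by omega
        have e1n : (k+1).choose n * (k + 1 - n) = (k + 1) * k.choose n := by
          have a1 := Nat.choose_succ_right_eq (k+1) n
          have a2 := Nat.add_one_mul_choose_eq k n
          omega
        have e1 : (((k+1).choose n : ℚ)) * ((k:ℚ) + 1 - (n : ℚ))
            = ((k:ℚ) + 1) * (k.choose n : ℚ) := by
          qify [hn1] at e1n
          linarith [e1n]
        have e2n : k.choose n * (k - n) = k * (k-1).choose n := by
          have a1 := Nat.choose_succ_right_eq k n
          have a2 := Nat.add_one_mul_choose_eq (k-1) n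
          have hsk : k - 1 + 1 = k := by omega
          rw [hsk] at a2
          omega
        have e2 : ((k.choose n : ℚ)) * ((k:ℚ) - (n : ℚ)) = (k:ℚ) * ((k-1).choose n : ℚ) := by
          qify [hnk] at e2n
          linarith [e2n]
        have e3n : (k+1).choose (n+1) * (n + 1) = (k+1).choose n * (k + 1 - n) :=
          Nat.choose_succ_right_eq (k+1) n
        have e3 : (((k+1).choose (n+1) : ℚ)) * ((n : ℚ) + 1)
            = (((k+1).choose n : ℚ)) * ((k:ℚ) + 1 - (n : ℚ)) := by
          qify [hn1] at e3n
          linarith [e3n]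
        have hKN : (k:ℚ) + 1 - (n : ℚ) ≠ 0 := by
          have : (n : ℚ) < (k:ℚ) + 1 := by exact_mod_cast h
          linarith
        have hN : (n : ℚ) + 1 ≠ 0 := by positivity
        have key := degTwenty_pointwise (k:ℚ) (n : ℚ) (k.choose n : ℚ) ((k+1).choose n : ℚ)
          ((k-1).choose n : ℚ) ((k+1).choose (n+1) : ℚ) hK hK1 hKN hN e1 e2 e3
        rw [key]
        unfold degTwentyG
        push_cast
        ring
      · -- the case n = k + 1
        have hn' : n = k + 1 := by omega
        subst hn'
        have z1 : k.choose (k+1) = 0 := Nat.choose_eq_zero_of_lt (by omega)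
        have z2 : (k-1).choose (k+1) = 0 := Nat.choose_eq_zero_of_lt (by omega)
        have z3 : (k+1).choose (k+1+1) = 0 := Nat.choose_eq_zero_of_lt (by omega)
        have z4 : (k+1).choose (k+1) = 1 := Nat.choose_self (k+1)
        unfold degTwentyG
        rw [z1, z2, z3, z4]
        push_cast
        rw [degTwentyCert_top (k:ℚ)]
        field_simp
        ring
    have Hsum := Finset.sum_congr rfl H
    have lhs_eq : ∑ n ∈ Finset.range (k+2), ((k:ℚ)+1)^3 * (((k+1).choose n : ℚ))^4
        = ((k:ℚ)+1)^3 * degTwentyCoeff (k+1) := by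
      rw [degTwentyCoeff_eq_sum_choose, Finset.mul_sum]
    have sum_g : ∑ n ∈ Finset.range (k+2), (degTwentyG k (n+1) - degTwentyG k n) = 0 := by
      rw [Finset.sum_range_sub (degTwentyG k) (k+2)]
      have z0 : (k+1).choose (k+2) = 0 := Nat.choose_eq_zero_of_lt (by omega)
      simp [degTwentyG, z0]
    have sum_a : ∑ n ∈ Finset.range (k+2), ((k.choose n : ℚ))^4 = degTwentyCoeff k := by
      rw [Finset.sum_range_succ, degTwentyCoeff_eq_sum_choose]
      simp [Nat.choose_eq_zero_of_lt (show k < k + 1 by omega)]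
    have sum_b : ∑ n ∈ Finset.range (k+2), (((k-1).choose n : ℚ))^4 = degTwentyCoeff (k-1) := by
      rw [Finset.sum_range_succ, Finset.sum_range_succ, degTwentyCoeff_eq_sum_choose]
      have hr : k - 1 + 1 = k := by omega
      rw [hr]
      simp [Nat.choose_eq_zero_of_lt (show k - 1 < k by omega),
        Nat.choose_eq_zero_of_lt (show k - 1 < k + 1 by omega)]
    rw [lhs_eq] at Hsum
    rw [Hsum, Finset.sum_add_distrib, Finset.sum_add_distrib, ← Finset.mul_sum, ← Finset.mul_sum,
      sum_a, sum_b, sum_g]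
    ring
end

section
/- Consider the coordinate change (x̃, ỹ, z̃, w̃) = (x − (√α/2)w, y − i√6 α^{1/4} x, z, w) applied to F_toric(a) = a₀ xyzw + a₁ y²zw + a₂ x³z + a₃ xz²w + a₄ z²w² + a₅ w⁴ + a₆ zw³ with (a₀,…,a₆) = (−2i√6 α^{1/4}, 1, −4, γ, −(δ+√α γ)/2, −1/2, β − α^{3/2}). Then the result equals the Clingher–Doran normal form f = y²zw − 4x³z + 3α xzw² + β zw³ + γ xz²w − (1/2)(δ z²w² + w⁴). -/
open Complex

/-- The coordinate change `(x̃, ỹ, z̃, w̃) = (x − (√α/2)w, y − i√6 α^{1/4} x, z, w)`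
transforms the Clingher–Doran normal form
`f = y²zw − 4x³z + 3α xzw² + β zw³ + γ xz²w − (1/2)(δ z²w² + w⁴)` into
`F_toric(a) = a₀ xyzw + a₁ y²zw + a₂ x³z + a₃ xz²w + a₄ z²w² + a₅ w⁴ + a₆ zw³`
with `(a₀,…,a₆) = (−2i√6 α^{1/4}, 1, −4, γ, −(δ+√α γ)/2, −1/2, β − α^{3/2})`. -/
theorem clingher_doran_normal_form_to_toric
    (α β γ δ sα qα : ℂ) (hq : qα ^ 2 = sα) (hs : sα ^ 2 = α)
    (x y z w : ℂ) :
    let a₀ : ℂ := -2 * Complex.I * (Real.sqrt 6 : ℂ) * qα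
    let a₁ : ℂ := 1
    let a₂ : ℂ := -4
    let a₃ : ℂ := γ
    let a₄ : ℂ := -(δ + sα * γ) / 2
    let a₅ : ℂ := -(1 / 2)
    let a₆ : ℂ := β - sα ^ 3
    let xt : ℂ := x - sα / 2 * w
    let yt : ℂ := y - Complex.I * (Real.sqrt 6 : ℂ) * qα * x
    let zt : ℂ := z
    let wt : ℂ := w
    yt ^ 2 * zt * wt - 4 * xt ^ 3 * zt + 3 * α * xt * zt * wt ^ 2 + β * zt * wt ^ 3
        + γ * xt * zt ^ 2 * wt - (1 / 2) * (δ * zt ^ 2 * wt ^ 2 + wt ^ 4)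
      = a₀ * x * y * z * w + a₁ * y ^ 2 * z * w + a₂ * x ^ 3 * z + a₃ * x * z ^ 2 * w
          + a₄ * z ^ 2 * w ^ 2 + a₅ * w ^ 4 + a₆ * z * w ^ 3 := by
  have h6 : ((Real.sqrt 6 : ℝ) : ℂ) ^ 2 = 6 := by
    norm_cast
    rw [Real.sq_sqrt] <;> norm_num
  subst hs hq
  simp only
  linear_combination (qα ^ 2 * x ^ 2 * z * w * ((Real.sqrt 6 : ℝ) : ℂ) ^ 2) * Complex.I_sq
    - (qα ^ 2 * x ^ 2 * z * w) * h6
end
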